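/- Let d ≥ 3 be odd and λ > 0. Then there exists a real polynomial p of degree (d−3)/2 with nonnegative coefficients, p(0) = 1, and 0 ≤ p(r) ≤ (1 + √λ · r)^d for all r ≥ 0, satisfying the ordinary differential equation r p''(r) − (d − 3 + 2√λ r) p'(r) + √λ (d − 3) p(r) = 0, such that the radial potential Φ(x) = p(‖x‖) e^{−√λ ‖x‖} ‖x‖^{2−d} is λ-harmonic on ℝ^d ∖ {0}: ΔΦ(x) = λ Φ(x) for every x ≠ 0. -/

import Mathlib

open Polynomial

/-- The Laplacian of `f : ℝ^d → ℝ` at `x`: the trace of the Hessian, i.e. the sum of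
the second derivatives in the coordinate directions. -/
noncomputable def laplacian {d : ℕ} (f : EuclideanSpace ℝ (Fin d) → ℝ)
    (x : EuclideanSpace ℝ (Fin d)) : ℝ :=
  ∑ i : Fin d, iteratedFDeriv ℝ 2 f x ![EuclideanSpace.single i 1, EuclideanSpace.single i 1]

/-!
A radial function `g (‖x‖)` has Laplacian `g'' + (d - 1) / r * g'` away from the origin. Writing
`Φ = q(r) r^(2-d)`, the harmonicity of `r^(2-d)` reduces `ΔΦ` to `r^(2-d) (q'' - (d - 3) / r * q')`,
and for `q = p(r) e^(-√λ r)` the equation `ΔΦ = λ Φ` becomes exactly the stated ODE for `p`.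
For `d = 2n + 3` this ODE has a polynomial solution of degree `n`, whose coefficients satisfy a
two-term recurrence and are dominated by those of `(1 + √λ r)^d`.
-/

open Filter Topology RealInnerProductSpace
open scoped Nat

noncomputable def besselCoeff (s : ℝ) (n k : ℕ) : ℝ :=
  (2 * s) ^ k * n.choose k / ((2 * n).choose k * k !)

/-- `besselPoly s n = θₙ(s X) / θₙ(0)` for the reverse Bessel polynomial `θₙ`. In dimension
`d = 2n + 3` the decaying radial solution `r^(1-d/2) K_{n+1/2}(s r)` of `Δu = s² u` is elementary,
because `K_{n+1/2}(z) = √(π / (2z)) e^(-z) θₙ(z) / zⁿ`. -/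
noncomputable def besselPoly (s : ℝ) (n : ℕ) : ℝ[X] :=
  ∑ k ∈ Finset.range (n + 1), C (besselCoeff s n k) * X ^ k

theorem besselCoeff_nonneg {s : ℝ} (hs : 0 ≤ s) (n k : ℕ) : 0 ≤ besselCoeff s n k := by
  unfold besselCoeff; positivity

theorem besselCoeff_of_lt {s : ℝ} {n k : ℕ} (h : n < k) : besselCoeff s n k = 0 := by
  simp [besselCoeff, Nat.choose_eq_zero_of_lt h]

theorem besselCoeff_zero (s : ℝ) (n : ℕ) : besselCoeff s n 0 = 1 := by
  simp [besselCoeff]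

theorem besselCoeff_self_ne_zero {s : ℝ} (hs : s ≠ 0) (n : ℕ) : besselCoeff s n n ≠ 0 := by
  have : (2 * n).choose n ≠ 0 := (Nat.choose_pos (by omega)).ne'
  simp [besselCoeff, hs, this, Nat.factorial_ne_zero]

theorem succ_mul_sub_mul_besselCoeff_succ (s : ℝ) (n k : ℕ) :
    ((k : ℝ) + 1) * (k - 2 * n) * besselCoeff s n (k + 1)
      = 2 * s * (k - n) * besselCoeff s n k := by
  rcases lt_or_ge k n with hk | hk
  · have hchoose : ∀ m, k ≤ m → (m.choose (k + 1) : ℝ) = m.choose k * (m - k) / (k + 1) := by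
      intro m hm
      rw [eq_div_iff (by positivity)]
      have h := congrArg ((↑) : ℕ → ℝ) (Nat.choose_succ_right_eq m k)
      push_cast [Nat.cast_sub hm] at h
      exact h
    have hpos : (0 : ℝ) < (2 * n).choose k := by exact_mod_cast Nat.choose_pos (by omega)
    have hkn : (k : ℝ) < n := by exact_mod_cast hk
    unfold besselCoeff
    rw [hchoose n hk.le, hchoose (2 * n) (by omega), Nat.factorial_succ]
    push_cast
    have : (2 * n : ℝ) - k ≠ 0 := by linarith
    field_simp
    ring
  · have hzero : besselCoeff s n (k + 1) = 0 := besselCoeff_of_lt (by omega)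
    rcases hk.eq_or_lt with rfl | hlt
    · simp [hzero]
    · simp [hzero, besselCoeff_of_lt hlt]

theorem coeff_besselPoly (s : ℝ) (n k : ℕ) : (besselPoly s n).coeff k = besselCoeff s n k := by
  rw [besselPoly, finsetSum_coeff]
  simp only [coeff_C_mul_X_pow]
  rw [Finset.sum_ite_eq]
  split_ifs with hk
  · rfl
  · rw [besselCoeff_of_lt (by simpa using hk)]

theorem eval_besselPoly (s : ℝ) (n : ℕ) (r : ℝ) :
    (besselPoly s n).eval r = ∑ k ∈ Finset.range (n + 1), besselCoeff s n k * r ^ k := by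
  simp [besselPoly, eval_finsetSum]

theorem eval_besselPoly_nonneg {s : ℝ} (hs : 0 ≤ s) (n : ℕ) {r : ℝ} (hr : 0 ≤ r) :
    0 ≤ (besselPoly s n).eval r := by
  rw [eval_besselPoly]
  exact Finset.sum_nonneg fun k _ => mul_nonneg (besselCoeff_nonneg hs n k) (pow_nonneg hr k)

theorem natDegree_besselPoly {s : ℝ} (hs : s ≠ 0) (n : ℕ) : (besselPoly s n).natDegree = n := by
  refine natDegree_eq_of_le_of_coeff_ne_zero ?_ ?_
  · exact natDegree_le_iff_coeff_eq_zero.mpr fun k hk => by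
      rw [coeff_besselPoly, besselCoeff_of_lt (by exact_mod_cast hk)]
  · rw [coeff_besselPoly]
    exact besselCoeff_self_ne_zero hs n

theorem besselPoly_ode (s : ℝ) {n d : ℕ} (hd : d = 2 * n + 3) (r : ℝ) :
    r * (besselPoly s n).derivative.derivative.eval r
      - ((d : ℝ) - 3 + 2 * s * r) * (besselPoly s n).derivative.eval r
      + s * ((d : ℝ) - 3) * (besselPoly s n).eval r = 0 := by
  set p := besselPoly s n
  have hpoly : X * p.derivative.derivative - C (2 * n : ℝ) * p.derivative
      - C (2 * s) * (X * p.derivative) + C (2 * s * n) * p = 0 := by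
    ext m
    simp only [coeff_add, coeff_sub, coeff_C_mul, coeff_zero]
    cases m with
    | zero =>
      simp only [mul_coeff_zero, coeff_X_zero, zero_mul, coeff_derivative, p, coeff_besselPoly]
      have h := succ_mul_sub_mul_besselCoeff_succ s n 0
      push_cast at h ⊢
      linear_combination h
    | succ j =>
      simp only [coeff_X_mul, coeff_derivative, p, coeff_besselPoly]
      have h := succ_mul_sub_mul_besselCoeff_succ s n (j + 1)
      push_cast at h ⊢
      linear_combination h
  have h := congrArg (eval r) hpoly
  simp only [eval_add, eval_sub, eval_mul, eval_C, eval_X, eval_zero] at h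
  subst hd
  push_cast
  linear_combination h

theorem Nat.two_pow_le_factorial_mul_choose {m k : ℕ} (h : k < m) : 2 ^ k ≤ k ! * m.choose k := by
  rw [← Nat.descFactorial_eq_factorial_mul_choose]
  exact (Nat.pow_le_pow_left (by omega) k).trans (Nat.pow_sub_le_descFactorial m k)

theorem besselCoeff_le {s : ℝ} (hs : 0 ≤ s) {n k : ℕ} (hk : k ≤ n) :
    besselCoeff s n k ≤ s ^ k * (2 * n + 3).choose k := by
  have hratio : (n.choose k : ℝ) / (2 * n).choose k ≤ 1 :=
    div_le_one_of_le₀ (by exact_mod_cast Nat.choose_le_choose k (by omega)) (by positivity)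
  have htwo : (2 : ℝ) ^ k ≤ k ! * (2 * n + 3).choose k := by
    exact_mod_cast Nat.two_pow_le_factorial_mul_choose (by omega)
  calc besselCoeff s n k = s ^ k * 2 ^ k / k ! * (n.choose k / (2 * n).choose k) := by
        unfold besselCoeff; ring
    _ ≤ s ^ k * 2 ^ k / k ! := mul_le_of_le_one_right (by positivity) hratio
    _ ≤ s ^ k * (2 * n + 3).choose k := by
        rw [div_le_iff₀ (by positivity), mul_assoc]
        exact mul_le_mul_of_nonneg_left (by linarith) (by positivity)

theorem eval_besselPoly_le {s : ℝ} (hs : 0 ≤ s) (n : ℕ) {r : ℝ} (hr : 0 ≤ r) :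
    (besselPoly s n).eval r ≤ (1 + s * r) ^ (2 * n + 3) := by
  rw [eval_besselPoly, add_comm 1 (s * r), add_pow]
  calc ∑ k ∈ Finset.range (n + 1), besselCoeff s n k * r ^ k
      ≤ ∑ k ∈ Finset.range (n + 1), (s * r) ^ k * 1 ^ (2 * n + 3 - k) * (2 * n + 3).choose k := by
        refine Finset.sum_le_sum fun k hk => ?_
        rw [one_pow, mul_one, mul_pow, mul_right_comm]
        exact mul_le_mul_of_nonneg_right
          (besselCoeff_le hs (Finset.mem_range_succ_iff.mp hk)) (by positivity)
    _ ≤ ∑ k ∈ Finset.range (2 * n + 3 + 1),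
          (s * r) ^ k * 1 ^ (2 * n + 3 - k) * (2 * n + 3).choose k :=
        Finset.sum_le_sum_of_subset_of_nonneg (Finset.range_subset_range.mpr (by omega))
          fun _ _ _ => by positivity

theorem hasFDerivAt_norm {E : Type*} [NormedAddCommGroup E] [InnerProductSpace ℝ E] {x : E}
    (hx : x ≠ 0) : HasFDerivAt (‖·‖) (‖x‖⁻¹ • innerSL ℝ x) x := by
  have hx' : ‖x‖ ≠ 0 := norm_ne_zero_iff.mpr hx
  have h := (Real.hasDerivAt_sqrt (pow_ne_zero 2 hx')).comp_hasFDerivAt x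
    (hasStrictFDerivAt_norm_sq x).hasFDerivAt
  simp only [Function.comp_def, Real.sqrt_sq (norm_nonneg _)] at h
  refine h.congr_fderiv ?_
  ext v
  simp only [smul_apply, smul_eq_mul, nsmul_eq_mul, Nat.cast_ofNat]
  field_simp

theorem laplacian_comp_norm {d : ℕ} {g g' : ℝ → ℝ} {g'' : ℝ} {x : EuclideanSpace ℝ (Fin d)}
    (hx : x ≠ 0) (hg : ∀ᶠ r in 𝓝 ‖x‖, HasDerivAt g (g' r) r) (hg' : HasDerivAt g' g'' ‖x‖) :
    laplacian (fun y => g ‖y‖) x = g'' + (d - 1) / ‖x‖ * g' ‖x‖ := by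
  have hx' : ‖x‖ ≠ 0 := norm_ne_zero_iff.mpr hx
  have hfderiv : fderiv ℝ (fun y => g ‖y‖) =ᶠ[𝓝 x] fun y => (g' ‖y‖ / ‖y‖) • innerSL ℝ y := by
    filter_upwards [continuous_norm.continuousAt.eventually hg, isOpen_ne.mem_nhds hx]
      with y hgy hy
    have hfy : HasFDerivAt (fun y => g ‖y‖) (g' ‖y‖ • (‖y‖⁻¹ • innerSL ℝ y)) y :=
      hgy.comp_hasFDerivAt y (hasFDerivAt_norm hy)
    rw [hfy.fderiv, smul_smul, div_eq_mul_inv]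
  have hquot : HasDerivAt (fun r => g' r / r) ((g'' * ‖x‖ - g' ‖x‖) / ‖x‖ ^ 2) ‖x‖ :=
    (hg'.div (hasDerivAt_id _) hx').congr_deriv (by rw [id, mul_one])
  have hhess := ((hquot.comp_hasFDerivAt x (hasFDerivAt_norm hx)).smul
    (innerSL ℝ).hasFDerivAt).congr_of_eventuallyEq hfderiv
  set b := EuclideanSpace.basisFun (Fin d) ℝ
  have hsingle : ∀ i, EuclideanSpace.single i (1 : ℝ) = b i :=
    fun i => (EuclideanSpace.basisFun_apply _ _ i).symm
  have hsum : ∑ i, ⟪x, b i⟫ * ⟪x, b i⟫ = ‖x‖ ^ 2 := by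
    simpa only [real_inner_comm x (b _), real_inner_self_eq_norm_sq] using b.sum_inner_mul_inner x x
  have hterm : ∀ i, fderiv ℝ (fderiv ℝ fun y => g ‖y‖) x (b i) (b i)
      = g' ‖x‖ / ‖x‖ + (g'' * ‖x‖ - g' ‖x‖) / ‖x‖ ^ 3 * (⟪x, b i⟫ * ⟪x, b i⟫) := fun i => by
    simp only [hhess.fderiv, add_apply, smul_apply, ContinuousLinearMap.smulRight_apply,
      Function.comp_apply, smul_eq_mul]
    rw [innerSL_apply_apply, innerSL_apply_apply, b.inner_eq_one]
    field_simp
  simp only [laplacian, iteratedFDeriv_two_apply, Matrix.cons_val_zero, Matrix.cons_val_one,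
    hsingle, hterm, Finset.sum_add_distrib, ← Finset.mul_sum, hsum, Finset.sum_const,
    Finset.card_univ, Fintype.card_fin, nsmul_eq_mul]
  field_simp
  ring

theorem laplacian_mul_norm_rpow_two_sub {d : ℕ} {q q' q'' : ℝ → ℝ}
    (hq : ∀ r, HasDerivAt q (q' r) r) (hq' : ∀ r, HasDerivAt q' (q'' r) r)
    {x : EuclideanSpace ℝ (Fin d)} (hx : x ≠ 0) :
    laplacian (fun y => q ‖y‖ * ‖y‖ ^ ((2 : ℝ) - d)) x
      = (q'' ‖x‖ - (d - 3) / ‖x‖ * q' ‖x‖) * ‖x‖ ^ ((2 : ℝ) - d) := by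
  have hr : ‖x‖ ≠ 0 := norm_ne_zero_iff.mpr hx
  set a : ℝ := 2 - d
  have hpow : ∀ {r : ℝ} (b : ℝ), r ≠ 0 → HasDerivAt (· ^ b) (b * r ^ (b - 1)) r :=
    fun b hr => Real.hasDerivAt_rpow_const (Or.inl hr)
  have hg : ∀ᶠ r in 𝓝 ‖x‖, HasDerivAt (fun r => q r * r ^ a)
      (q' r * r ^ a + q r * (a * r ^ (a - 1))) r := by
    filter_upwards [isOpen_ne.mem_nhds hr] with r hr
    exact (hq r).mul (hpow a hr)
  have hg' := ((hq' ‖x‖).mul (hpow a hr)).add ((hq ‖x‖).mul ((hpow (a - 1) hr).const_mul a))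
  rw [laplacian_comp_norm hx hg hg']
  simp only [Real.rpow_sub_one hr]
  field_simp
  ring

theorem hasDerivAt_eval_mul_exp (f : ℝ[X]) (s r : ℝ) :
    HasDerivAt (fun r => f.eval r * Real.exp (-s * r))
      ((f.derivative - C s * f).eval r * Real.exp (-s * r)) r := by
  have hexp : HasDerivAt (fun r => Real.exp (-s * r)) (Real.exp (-s * r) * -s) r := by
    simpa using ((hasDerivAt_id r).const_mul (-s)).exp
  refine ((f.hasDerivAt r).mul hexp).congr_deriv ?_
  simp only [eval_sub, eval_mul, eval_C]
  ring

theorem laplacian_eval_mul_exp_mul_rpow {d : ℕ} (p : ℝ[X]) {s : ℝ}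
    (hode : ∀ r : ℝ, r * p.derivative.derivative.eval r
      - ((d : ℝ) - 3 + 2 * s * r) * p.derivative.eval r + s * ((d : ℝ) - 3) * p.eval r = 0)
    {x : EuclideanSpace ℝ (Fin d)} (hx : x ≠ 0) :
    laplacian (fun y => p.eval ‖y‖ * Real.exp (-s * ‖y‖) * ‖y‖ ^ ((2 : ℝ) - d)) x
      = s ^ 2 * (p.eval ‖x‖ * Real.exp (-s * ‖x‖) * ‖x‖ ^ ((2 : ℝ) - d)) := by
  set p₁ := p.derivative - C s * p
  rw [laplacian_mul_norm_rpow_two_sub (hasDerivAt_eval_mul_exp p s)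
    (hasDerivAt_eval_mul_exp p₁ s) hx]
  have hr : ‖x‖ ≠ 0 := norm_ne_zero_iff.mpr hx
  simp only [p₁, derivative_sub, derivative_mul, derivative_C, zero_mul, zero_add, eval_sub,
    eval_mul, eval_C]
  field_simp
  linear_combination hode ‖x‖

theorem stmt10 (d : ℕ) (hd3 : 3 ≤ d) (hodd : Odd d) (lam : ℝ) (hlam : 0 < lam) :
    ∃ p : Polynomial ℝ,
      p.natDegree = (d - 3) / 2 ∧
      (∀ i, 0 ≤ p.coeff i) ∧
      p.eval 0 = 1 ∧
      (∀ r : ℝ, 0 ≤ r →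
        0 ≤ p.eval r ∧ p.eval r ≤ (1 + Real.sqrt lam * r) ^ d) ∧
      (∀ r : ℝ,
        r * (p.derivative.derivative).eval r
          - ((d : ℝ) - 3 + 2 * Real.sqrt lam * r) * p.derivative.eval r
          + Real.sqrt lam * ((d : ℝ) - 3) * p.eval r = 0) ∧
      (∀ x : EuclideanSpace ℝ (Fin d), x ≠ 0 →
        laplacian (fun y => p.eval ‖y‖ * Real.exp (-Real.sqrt lam * ‖y‖)
            * ‖y‖ ^ ((2 : ℝ) - d)) x
          = lam * (p.eval ‖x‖ * Real.exp (-Real.sqrt lam * ‖x‖) * ‖x‖ ^ ((2 : ℝ) - d))) := by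
  have hs : 0 < Real.sqrt lam := Real.sqrt_pos.mpr hlam
  obtain ⟨n, hn⟩ : ∃ n, d = 2 * n + 3 := by
    obtain ⟨t, rfl⟩ := hodd
    exact ⟨t - 1, by omega⟩
  have hode := besselPoly_ode (Real.sqrt lam) hn
  refine ⟨besselPoly (Real.sqrt lam) n, by rw [natDegree_besselPoly hs.ne']; omega,
    fun k => (coeff_besselPoly _ n k).symm ▸ besselCoeff_nonneg hs.le n k, ?_,
    fun r hr => ⟨eval_besselPoly_nonneg hs.le n hr, hn ▸ eval_besselPoly_le hs.le n hr⟩, hode,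
    fun x hx => ?_⟩
  · rw [← coeff_zero_eq_eval_zero, coeff_besselPoly, besselCoeff_zero]
  · rw [laplacian_eval_mul_exp_mul_rpow _ hode hx, Real.sq_sqrt hlam.le]
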